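/- Let H be a self-adjoint operator and f a vector such that sup{ |⟨(H − λ − iε)⁻¹ f, f⟩| : a ≤ λ ≤ b, 0 < ε < 1 } < ∞. Then the spectral measure μ_f of H associated with f gives zero mass to every subset of (a,b) of Lebesgue measure zero intersected with the complement of the atoms; in particular μ_f restricted to (a,b) has no singular continuous part. -/

import Mathlib

open MeasureTheory Complex Set
open scoped InnerProductSpace

/-!
The imaginary part of the Borel transform at `x + iε` is the Poisson integral
`∫ ε / ((t - x)² + ε²) dμ(t)`, whose kernel is at least `1 / (2ε)` on `[x - ε, x + ε]`.
Hence a bound `C` on the Borel transform near `(a, b)` gives `μ [x - ε, x + ε] ≤ 2Cε`,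
i.e. `μ ≤ C · Lebesgue` on small balls centred in `(a, b)`. Besicovitch's differentiation
theory turns this comparison on balls into `μ B ≤ C · |B| = 0` for every Lebesgue-null
`B ⊆ (a, b)`.
-/

/-- A measure has no singular continuous part on `s` if every Lebesgue-null subset of `s`,
with the atoms removed, has measure zero. -/
def NoSingularContinuousOn (μ : Measure ℝ) (s : Set ℝ) : Prop :=
  ∀ B : Set ℝ, B ⊆ s → MeasurableSet B → volume B = 0 →
    μ (B \ {x : ℝ | μ {x} ≠ 0}) = 0

namespace MeasureTheory

open Filter Metric Topology

theorem Measure.le_of_eventually_closedBall_le {α : Type*} [MetricSpace α]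
    [SecondCountableTopology α] [MeasurableSpace α] [BorelSpace α] [HasBesicovitchCovering α]
    (μ ν : Measure α) [SFinite μ] [IsLocallyFiniteMeasure ν] (s : Set α)
    (h : ∀ x ∈ s, ∀ᶠ r in 𝓝[>] 0, μ (closedBall x r) ≤ ν (closedBall x r)) : μ s ≤ ν s :=
  (Besicovitch.vitaliFamily μ).measure_le_of_frequently_le ν Measure.AbsolutelyContinuous.rfl s
    fun x hx => (Besicovitch.tendsto_filterAt μ x).frequently (h x hx).frequently

noncomputable def borelTransform (μ : Measure ℝ) (z : ℂ) : ℂ :=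
  ∫ t : ℝ, ((t : ℂ) - z)⁻¹ ∂μ

theorem integrable_inv_ofReal_sub (μ : Measure ℝ) [IsFiniteMeasure μ] {z : ℂ} (hz : z.im ≠ 0) :
    Integrable (fun t : ℝ => ((t : ℂ) - z)⁻¹) μ := by
  have hne : ∀ t : ℝ, (t : ℂ) - z ≠ 0 := fun t h => hz (by simpa using congrArg im h)
  refine Integrable.mono' (integrable_const |z.im|⁻¹)
    ((continuous_ofReal.sub continuous_const).inv₀ hne).aestronglyMeasurable
    (Eventually.of_forall fun t => ?_)
  rw [norm_inv]
  refine inv_anti₀ (abs_pos.2 hz) ?_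
  simpa using abs_im_le_norm ((t : ℂ) - z)

theorem im_inv_ofReal_sub (t : ℝ) (z : ℂ) :
    ((t : ℂ) - z)⁻¹.im = z.im / ((t - z.re) ^ 2 + z.im ^ 2) := by
  rw [inv_im, normSq_apply]
  simp only [sub_im, ofReal_im, sub_re, ofReal_re]
  ring

theorem im_borelTransform (μ : Measure ℝ) [IsFiniteMeasure μ] {z : ℂ} (hz : z.im ≠ 0) :
    (borelTransform μ z).im = ∫ t, z.im / ((t - z.re) ^ 2 + z.im ^ 2) ∂μ := by
  simp_rw [← im_inv_ofReal_sub]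
  exact (integral_im (integrable_inv_ofReal_sub μ hz)).symm

theorem measure_closedBall_le_im_borelTransform (μ : Measure ℝ) [IsFiniteMeasure μ] {z : ℂ}
    (hz : 0 < z.im) :
    μ (closedBall z.re z.im) ≤ ENNReal.ofReal (2 * z.im * (borelTransform μ z).im) := by
  set P : ℝ → ℝ := fun t => z.im / ((t - z.re) ^ 2 + z.im ^ 2)
  have hP_int : Integrable P μ :=
    (integrable_inv_ofReal_sub μ hz.ne').im.congr
      (Eventually.of_forall fun t => im_inv_ofReal_sub t z)
  have hball : closedBall z.re z.im ⊆ {t | (2 * z.im)⁻¹ ≤ P t} := by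
    intro t ht
    have hsq : (t - z.re) ^ 2 ≤ z.im ^ 2 := sq_le_sq' (abs_le.1 ht).1 (abs_le.1 ht).2
    calc (2 * z.im)⁻¹ = z.im / (z.im ^ 2 + z.im ^ 2) := by field_simp; ring
      _ ≤ P t := div_le_div_of_nonneg_left hz.le (by positivity) (by linarith)
  have hmarkov := mul_meas_ge_le_integral_of_nonneg
    (Eventually.of_forall fun t => by positivity) hP_int (2 * z.im)⁻¹
  rw [← im_borelTransform μ hz.ne'] at hmarkov
  rw [← ofReal_measureReal]
  refine ENNReal.ofReal_le_ofReal ?_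
  calc μ.real (closedBall z.re z.im) ≤ μ.real {t | (2 * z.im)⁻¹ ≤ P t} := measureReal_mono hball
    _ ≤ 2 * z.im * (borelTransform μ z).im := by
      rwa [inv_mul_le_iff₀ (by positivity)] at hmarkov

theorem measure_closedBall_le_of_norm_borelTransform_le (μ : Measure ℝ) [IsFiniteMeasure μ]
    {x ε C : ℝ} (hε : 0 < ε) (hC : ‖borelTransform μ (x + ε * I)‖ ≤ C) :
    μ (closedBall x ε) ≤ ENNReal.ofReal C * volume (closedBall x ε) := by
  have hre : ((x : ℂ) + ε * I).re = x := by simp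
  have him : ((x : ℂ) + ε * I).im = ε := by simp
  have hbound := measure_closedBall_le_im_borelTransform μ (z := x + ε * I) (him.symm ▸ hε)
  rw [hre, him] at hbound
  have him_le : (borelTransform μ (x + ε * I)).im ≤ C :=
    (le_abs_self _).trans ((abs_im_le_norm _).trans hC)
  rw [Real.volume_closedBall, ← ENNReal.ofReal_mul' (by positivity)]
  refine hbound.trans (ENNReal.ofReal_le_ofReal ?_)
  linarith [mul_le_mul_of_nonneg_left him_le (by positivity : (0 : ℝ) ≤ 2 * ε)]

end MeasureTheory

theorem spectral_measure_no_sc_of_bounded_resolvent_general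
    {E : Type*} [NormedAddCommGroup E] [InnerProductSpace ℂ E]
    (H : E →L[ℂ] E) (f : E)
    (μ : Measure ℝ) [IsFiniteMeasure μ]
    (hres : ∀ z : ℂ, 0 < z.im →
      ⟪(Ring.inverse (H - z • (1 : E →L[ℂ] E))) f, f⟫_ℂ
        = ∫ t : ℝ, ((t : ℂ) - z)⁻¹ ∂μ)
    (a b : ℝ)
    (hbdd : ∃ C : ℝ, ∀ lam ∈ Icc a b, ∀ ε ∈ Ioo (0 : ℝ) 1,
      ‖⟪(Ring.inverse (H - ((lam : ℂ) + (ε : ℂ) * Complex.I) • (1 : E →L[ℂ] E))) f, f⟫_ℂ‖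
        ≤ C) :
    NoSingularContinuousOn μ (Ioo a b) := by
  intro B hB _ hB_null
  obtain ⟨C, hC⟩ := hbdd
  have hballs : ∀ x ∈ B, ∀ᶠ r in nhdsWithin 0 (Ioi 0),
      μ (Metric.closedBall x r) ≤ (C.toNNReal • volume) (Metric.closedBall x r) := by
    intro x hx
    filter_upwards [Ioo_mem_nhdsGT one_pos] with ε hε
    refine measure_closedBall_le_of_norm_borelTransform_le μ hε.1 ?_
    rw [borelTransform, ← hres _ (by simpa using hε.1)]
    exact hC x (Ioo_subset_Icc_self (hB hx)) ε hε
  have hμB : μ B = 0 := by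
    simpa [hB_null] using Measure.le_of_eventually_closedBall_le μ _ B hballs
  exact measure_mono_null sdiff_subset hμB

/-- Let `H` be self-adjoint, `f` a vector, and `μ` the spectral measure of `H`
associated with `f` (so `⟨(H − z)⁻¹ f, f⟩ = ∫ (t − z)⁻¹ dμ(t)` for `Im z > 0`). If
`sup { |⟨(H − λ − iε)⁻¹ f, f⟩| : a ≤ λ ≤ b, 0 < ε < 1 } < ∞`, then `μ` gives zero mass to
every Lebesgue-null subset of `(a,b)` intersected with the complement of the atoms; in
particular `μ` has no singular continuous part on `(a,b)`. -/
theorem spectral_measure_no_sc_of_bounded_resolvent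
    {E : Type*} [NormedAddCommGroup E] [InnerProductSpace ℂ E] [CompleteSpace E]
    (H : E →L[ℂ] E) (hH : IsSelfAdjoint H) (f : E)
    (μ : Measure ℝ) [IsFiniteMeasure μ]
    (hres : ∀ z : ℂ, 0 < z.im →
      ⟪(Ring.inverse (H - z • (1 : E →L[ℂ] E))) f, f⟫_ℂ
        = ∫ t : ℝ, ((t : ℂ) - z)⁻¹ ∂μ)
    (a b : ℝ)
    (hbdd : ∃ C : ℝ, ∀ lam ∈ Icc a b, ∀ ε ∈ Ioo (0 : ℝ) 1,
      ‖⟪(Ring.inverse (H - ((lam : ℂ) + (ε : ℂ) * Complex.I) • (1 : E →L[ℂ] E))) f, f⟫_ℂ‖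
        ≤ C) :
    NoSingularContinuousOn μ (Ioo a b) :=
  spectral_measure_no_sc_of_bounded_resolvent_general H f μ hres a b hbdd
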